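/- arXiv:2508.08664 — 6 statements merged into one kernel-verified Lean document; each statement's English description precedes it below -/
import Mathlib

section
/- For positive definite n×n complex matrices A and B, the geometric mean of A+B and (A⁻¹+B⁻¹)⁻¹ equals the geometric mean of A and B, i.e. (A+B) ♯ (A⁻¹+B⁻¹)⁻¹ = A ♯ B. -/
/-!
`A ♯ B` is the unique positive semidefinite solution `G` of the Riccati equation `G A⁻¹ G = B`:
conjugating by `A^{-1/2}` turns the equation into
`(A^{-1/2} G A^{-1/2})² = A^{-1/2} B A^{-1/2}`. For `G = A ♯ B`, inverting `G A⁻¹ G = B`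
gives `G B⁻¹ G = A`; adding the two equations gives `G (A⁻¹ + B⁻¹) G = A + B`, and inverting
once more `G (A + B)⁻¹ G = (A⁻¹ + B⁻¹)⁻¹`.
-/

open Matrix
open scoped ComplexOrder

/-- The positive square root of a positive semidefinite matrix, realized via the
continuous functional calculus for Hermitian matrices. -/
noncomputable def msqrt {n : Type*} [Fintype n] [DecidableEq n]
    (A : Matrix n n ℂ) : Matrix n n ℂ := cfc Real.sqrt A

/-- The matrix geometric mean `A ♯ B = A^{1/2} (A^{-1/2} B A^{-1/2})^{1/2} A^{1/2}`. -/
noncomputable def geom {n : Type*} [Fintype n] [DecidableEq n]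
    (A B : Matrix n n ℂ) : Matrix n n ℂ :=
  msqrt A * msqrt ((msqrt A)⁻¹ * B * (msqrt A)⁻¹) * msqrt A

namespace Matrix

lemma PosSemidef.mul_mul_of_isHermitian {n R : Type*} [Fintype n] [Ring R] [PartialOrder R]
    [StarRing R] {X S : Matrix n n R} (hX : X.PosSemidef) (hS : S.IsHermitian) :
    (S * X * S).PosSemidef := by
  simpa only [hS.eq] using hX.conjTranspose_mul_mul_same S

lemma PosDef.isUnit_det {n K : Type*} [Fintype n] [DecidableEq n] [Field K] [PartialOrder K]
    [StarRing K] {A : Matrix n n K} (hA : A.PosDef) : IsUnit A.det :=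
  (isUnit_iff_isUnit_det A).mp hA.isUnit

variable {n R : Type*} [Fintype n] [DecidableEq n] [CommRing R]

lemma isUnit_det_of_mul_self_eq {S A : Matrix n n R} (h : S * S = A) (hA : IsUnit A.det) :
    IsUnit S.det :=
  isUnit_of_mul_isUnit_left (by rwa [← det_mul, h])

lemma mul_mul_inv_mul_mul {S : Matrix n n R} (hS : IsUnit S.det) (X : Matrix n n R) :
    S * (S⁻¹ * X * S⁻¹) * S = X := by
  simp only [Matrix.mul_assoc, mul_nonsing_inv_cancel_left _ _ hS, nonsing_inv_mul _ hS,
    Matrix.mul_one]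

lemma mul_inv_mul_eq_inv_of_mul_mul_eq {G X Y : Matrix n n R} (h : G * X * G = Y)
    (hY : IsUnit Y.det) : G * Y⁻¹ * G = X⁻¹ := by
  have hG : IsUnit G.det := by
    rw [← h, det_mul, det_mul, mul_comm, ← mul_assoc] at hY
    exact isUnit_of_mul_isUnit_left (isUnit_of_mul_isUnit_left hY)
  rw [← h, Matrix.mul_inv_rev, Matrix.mul_inv_rev]
  simp only [Matrix.mul_assoc, mul_nonsing_inv_cancel_left _ _ hG, nonsing_inv_mul _ hG,
    Matrix.mul_one]

end Matrix

section msqrt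

variable {n : Type*} [Fintype n] [DecidableEq n]

open scoped MatrixOrder

lemma msqrt_posSemidef (A : Matrix n n ℂ) : (msqrt A).PosSemidef :=
  nonneg_iff_posSemidef.mp (cfc_nonneg fun x _ ↦ Real.sqrt_nonneg x)

lemma msqrt_eq_cfcSqrt {A : Matrix n n ℂ} (hA : A.PosSemidef) : msqrt A = CFC.sqrt A := by
  rw [msqrt, CFC.sqrt_eq_real_sqrt A hA.nonneg, cfcₙ_eq_cfc]

lemma msqrt_mul_self {A : Matrix n n ℂ} (hA : A.PosSemidef) : msqrt A * msqrt A = A := by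
  rw [msqrt_eq_cfcSqrt hA]
  exact CFC.sqrt_mul_sqrt_self A hA.nonneg

lemma msqrt_mul_self_eq {G : Matrix n n ℂ} (hG : G.PosSemidef) : msqrt (G * G) = G := by
  have hGG : (G * G).PosSemidef := by
    simpa only [hG.isHermitian.eq] using posSemidef_conjTranspose_mul_self G
  rw [msqrt_eq_cfcSqrt hGG]
  exact CFC.sqrt_unique rfl hG.nonneg

lemma msqrt_inv_mul_msqrt_inv {A : Matrix n n ℂ} (hA : A.PosSemidef) :
    (msqrt A)⁻¹ * (msqrt A)⁻¹ = A⁻¹ := by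
  rw [← Matrix.mul_inv_rev, msqrt_mul_self hA]

lemma isUnit_det_msqrt {A : Matrix n n ℂ} (hA : A.PosDef) : IsUnit (msqrt A).det :=
  isUnit_det_of_mul_self_eq (msqrt_mul_self hA.posSemidef) hA.isUnit_det

end msqrt

section geom

variable {n : Type*} [Fintype n] [DecidableEq n]

lemma geom_posSemidef (A B : Matrix n n ℂ) : (geom A B).PosSemidef := by
  simpa only [geom, (msqrt_posSemidef A).isHermitian.eq] using
    (msqrt_posSemidef _).conjTranspose_mul_mul_same (msqrt A)

lemma geom_mul_inv_mul_geom {A B : Matrix n n ℂ} (hA : A.PosDef) (hB : B.PosSemidef) :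
    geom A B * A⁻¹ * geom A B = B := by
  have hS := isUnit_det_msqrt hA
  have hT := hB.mul_mul_of_isHermitian (msqrt_posSemidef A).isHermitian.inv
  rw [geom, ← msqrt_inv_mul_msqrt_inv hA.posSemidef]
  set S := msqrt A
  set T := msqrt (S⁻¹ * B * S⁻¹)
  calc S * T * S * (S⁻¹ * S⁻¹) * (S * T * S) = S * (T * T) * S := by
        simp only [Matrix.mul_assoc, mul_nonsing_inv_cancel_left _ _ hS,
          nonsing_inv_mul_cancel_left _ _ hS]
    _ = B := by rw [msqrt_mul_self hT, mul_mul_inv_mul_mul hS]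

lemma geom_eq_of_mul_inv_mul {A B G : Matrix n n ℂ} (hA : A.PosDef) (hG : G.PosSemidef)
    (h : G * A⁻¹ * G = B) : geom A B = G := by
  have hS := isUnit_det_msqrt hA
  have hH := hG.mul_mul_of_isHermitian (msqrt_posSemidef A).isHermitian.inv
  rw [← msqrt_inv_mul_msqrt_inv hA.posSemidef] at h
  set S := msqrt A
  have hsq : S⁻¹ * B * S⁻¹ = (S⁻¹ * G * S⁻¹) * (S⁻¹ * G * S⁻¹) := by
    simp only [← h, Matrix.mul_assoc]
  rw [geom, hsq, msqrt_mul_self_eq hH, mul_mul_inv_mul_mul hS]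

end geom

/-- For positive definite matrices `A, B`:  `(A+B) ♯ (A⁻¹+B⁻¹)⁻¹ = A ♯ B`. -/
theorem geom_add_inv_add_inv {n : Type*} [Fintype n] [DecidableEq n]
    (A B : Matrix n n ℂ) (hA : A.PosDef) (hB : B.PosDef) :
    geom (A + B) (A⁻¹ + B⁻¹)⁻¹ = geom A B := by
  set G := geom A B
  have hGA : G * A⁻¹ * G = B := geom_mul_inv_mul_geom hA hB.posSemidef
  have hGB : G * B⁻¹ * G = A := by
    rw [mul_inv_mul_eq_inv_of_mul_mul_eq hGA hB.isUnit_det,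
      nonsing_inv_nonsing_inv _ hA.isUnit_det]
  have hsum : G * (A⁻¹ + B⁻¹) * G = A + B := by
    rw [Matrix.mul_add, Matrix.add_mul, hGA, hGB, add_comm]
  exact geom_eq_of_mul_inv_mul (hA.add hB) (geom_posSemidef A B)
    (mul_inv_mul_eq_inv_of_mul_mul_eq hsum (hA.add hB).isUnit_det)
end

section
/- Monotonicity of the resolvent average in the parameter: for positive definite matrices A₁,…,Aₘ, weights λ summing to 1, and 0 ≤ μ ≤ ν, one has R_μ(A,λ) ≤ R_ν(A,λ) in the Loewner order. -/
/-!
Write `Tμ = ∑ᵢ wᵢ (Aᵢ + μ)⁻¹`, so that `R_μ = Tμ⁻¹ - μ`, and put `c = ν - μ`, `Sᵢ = (Aᵢ + μ)⁻¹`.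
Then `(Aᵢ + ν)⁻¹ = (Sᵢ⁻¹ + c)⁻¹`, and `S ↦ (S⁻¹ + c)⁻¹ = c⁻¹ (1 - (1 + c S)⁻¹)` is operator
concave because inversion is operator convex. Jensen's inequality gives `Tν ≤ (Tμ⁻¹ + c)⁻¹`, and
since inversion is operator antitone, `Tμ⁻¹ + c ≤ Tν⁻¹`, which is `R_μ ≤ R_ν`.
-/

open Matrix
open scoped ComplexOrder

/-- The (parametrized) resolvent average `R_μ(A, w) = (∑ᵢ wᵢ (Aᵢ + μI)⁻¹)⁻¹ − μI`
of a family of matrices. -/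
noncomputable def resAvg {n : Type*} [Fintype n] [DecidableEq n] {m : ℕ}
    (μ : ℝ) (A : Fin m → Matrix n n ℂ) (w : Fin m → ℝ) : Matrix n n ℂ :=
  (∑ i, w i • (A i + μ • (1 : Matrix n n ℂ))⁻¹)⁻¹ - μ • (1 : Matrix n n ℂ)

open scoped MatrixOrder Matrix.Norms.L2Operator

namespace Matrix

variable {n ι : Type*} {s : Finset ι} {w : ι → ℝ}

theorem convex_setOf_posDef {𝕜 : Type*} [RCLike 𝕜] : Convex ℝ {S : Matrix n n 𝕜 | S.PosDef} :=
  convex_iff_forall_pos.2 fun _ hX _ hY _ _ ha hb _ => (hX.smul ha).add (hY.smul hb)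

theorem posDef_sum_smul {𝕜 : Type*} [RCLike 𝕜] {B : ι → Matrix n n 𝕜} (hB : ∀ i ∈ s, (B i).PosDef)
    (hw₀ : ∀ i ∈ s, 0 ≤ w i) (hw₁ : ∑ i ∈ s, w i = 1) : (∑ i ∈ s, w i • B i).PosDef :=
  (convex_setOf_posDef (n := n) (𝕜 := 𝕜)).sum_mem hw₀ hw₁ hB

variable [Fintype n] [DecidableEq n]

theorem PosDef.inv_inv {K : Type*} [Field K] [PartialOrder K] [StarRing K] {S : Matrix n n K}
    (hS : S.PosDef) : S⁻¹⁻¹ = S :=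
  nonsing_inv_nonsing_inv S ((isUnit_iff_isUnit_det S).mp hS.isUnit)

theorem PosDef.inv_le_inv {X Y : Matrix n n ℂ} (hX : X.PosDef) (h : X ≤ Y) : Y⁻¹ ≤ X⁻¹ := by
  have hY : Y.PosDef := by simpa using hX.add_posSemidef h
  simpa only [coe_units_inv, IsUnit.unit_spec] using
    CStarAlgebra.inv_le_inv (a := hX.isUnit.unit) (b := hY.isUnit.unit) hX.posSemidef.nonneg h

theorem smul_inv_inv_add_smul_one {R α : Type*} [CommRing R] [CommRing α] [Algebra R α]
    {S : Matrix n n α} (hS : IsUnit S) {c : R} (hcS : IsUnit (1 + c • S)) :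
    c • (S⁻¹ + c • 1)⁻¹ = 1 - (1 + c • S)⁻¹ := by
  rw [isUnit_iff_isUnit_det] at hS hcS
  have hfac : S⁻¹ + c • 1 = S⁻¹ * (1 + c • S) := by
    rw [Matrix.mul_add, Matrix.mul_one, Matrix.mul_smul, nonsing_inv_mul _ hS]
  calc c • (S⁻¹ + c • 1)⁻¹ = (1 + c • S)⁻¹ * ((1 + c • S) - 1) := by
        rw [hfac, mul_inv_rev, nonsing_inv_nonsing_inv _ hS, add_sub_cancel_left, Matrix.mul_smul]
    _ = 1 - (1 + c • S)⁻¹ := by rw [Matrix.mul_sub, nonsing_inv_mul _ hcS, Matrix.mul_one]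

theorem inv_sum_smul_le_sum_smul_inv {B : ι → Matrix n n ℂ} (hB : ∀ i ∈ s, (B i).PosDef)
    (hw₀ : ∀ i ∈ s, 0 ≤ w i) (hw₁ : ∑ i ∈ s, w i = 1) :
    (∑ i ∈ s, w i • B i)⁻¹ ≤ ∑ i ∈ s, w i • (B i)⁻¹ := by
  simpa only [nonsing_inv_eq_ringInverse] using
    CStarAlgebra.convexOn_ringInverse.map_sum_le hw₀ hw₁ fun i hi => (hB i hi).isStrictlyPositive

theorem sum_smul_inv_inv_add_smul_one_le {S : ι → Matrix n n ℂ} (hS : ∀ i ∈ s, (S i).PosDef)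
    (hw₀ : ∀ i ∈ s, 0 ≤ w i) (hw₁ : ∑ i ∈ s, w i = 1) {c : ℝ} (hc : 0 ≤ c) :
    ∑ i ∈ s, w i • ((S i)⁻¹ + c • 1)⁻¹ ≤ ((∑ i ∈ s, w i • S i)⁻¹ + c • 1)⁻¹ := by
  have hT : (∑ i ∈ s, w i • S i).PosDef := posDef_sum_smul hS hw₀ hw₁
  rcases hc.eq_or_lt with rfl | hc
  · refine le_of_eq ?_
    simp only [zero_smul, add_zero, hT.inv_inv]
    exact Finset.sum_congr rfl fun i hi => by rw [(hS i hi).inv_inv]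
  have hB : ∀ i ∈ s, (1 + c • S i).PosDef := fun i hi => PosDef.one.add ((hS i hi).smul hc)
  have hsum : 1 + c • ∑ i ∈ s, w i • S i = ∑ i ∈ s, w i • (1 + c • S i) := by
    simp only [smul_add, Finset.sum_add_distrib, ← Finset.sum_smul, hw₁, one_smul,
      Finset.smul_sum, smul_comm c]
  have hterm : ∀ i ∈ s, c • w i • ((S i)⁻¹ + c • 1)⁻¹ = w i • (1 - (1 + c • S i)⁻¹) :=
    fun i hi => by rw [smul_comm, smul_inv_inv_add_smul_one (hS i hi).isUnit (hB i hi).isUnit]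
  rw [← smul_le_smul_iff_of_pos_left hc, Finset.smul_sum, Finset.sum_congr rfl hterm,
    smul_inv_inv_add_smul_one hT.isUnit (hsum ▸ (posDef_sum_smul hB hw₀ hw₁).isUnit), hsum]
  simp only [smul_sub, Finset.sum_sub_distrib, ← Finset.sum_smul, hw₁, one_smul]
  exact sub_le_sub_left (inv_sum_smul_le_sum_smul_inv hB hw₀ hw₁) 1

end Matrix

/-- Monotonicity of the resolvent average in the parameter:
for `0 ≤ μ ≤ ν`, `R_μ(A,w) ≤ R_ν(A,w)` in the Loewner order. -/
theorem resAvg_mono_param {n : Type*} [Fintype n] [DecidableEq n] {m : ℕ}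
    (A : Fin m → Matrix n n ℂ) (hA : ∀ i, (A i).PosDef)
    (w : Fin m → ℝ) (hw : ∀ i, 0 ≤ w i) (hw1 : ∑ i, w i = 1)
    (μ ν : ℝ) (hμ : 0 ≤ μ) (hμν : μ ≤ ν) :
    (resAvg ν A w - resAvg μ A w).PosSemidef := by
  have hA_add : ∀ t : ℝ, 0 ≤ t → ∀ i, (A i + t • (1 : Matrix n n ℂ)).PosDef :=
    fun t ht i => (hA i).add_posSemidef (PosSemidef.one.smul ht)
  have hc : 0 ≤ ν - μ := sub_nonneg.2 hμν
  have hw₀ : ∀ i ∈ Finset.univ, 0 ≤ w i := fun i _ => hw i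
  have hS : ∀ i ∈ Finset.univ, ((A i + μ • (1 : Matrix n n ℂ))⁻¹).PosDef :=
    fun i _ => (hA_add μ hμ i).inv
  set Tμ := ∑ i, w i • (A i + μ • (1 : Matrix n n ℂ))⁻¹
  set Tν := ∑ i, w i • (A i + ν • (1 : Matrix n n ℂ))⁻¹
  have hTν : Tν.PosDef := posDef_sum_smul (fun i _ => (hA_add ν (hμ.trans hμν) i).inv) hw₀ hw1
  have hTμc : (Tμ⁻¹ + (ν - μ) • 1).PosDef :=
    (posDef_sum_smul hS hw₀ hw1).inv.add_posSemidef (PosSemidef.one.smul hc)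
  have hconc : Tν ≤ (Tμ⁻¹ + (ν - μ) • 1)⁻¹ := by
    convert sum_smul_inv_inv_add_smul_one_le hS hw₀ hw1 hc using 3 with i
    rw [(hA_add μ hμ i).inv_inv, add_assoc, ← add_smul, add_sub_cancel]
  rw [← le_iff, resAvg, resAvg]
  calc Tμ⁻¹ - μ • 1 = (Tμ⁻¹ + (ν - μ) • 1) - ν • 1 := by rw [sub_smul]; abel
    _ ≤ Tν⁻¹ - ν • 1 := by simpa only [hTμc.inv_inv] using sub_le_sub_right (hTν.inv_le_inv hconc) _
end

section
/- For a unital positive linear map Φ on n×n matrices, positive definite matrices A₁,…,Aₘ, weights λ summing to 1, and μ > 0, one has Φ(R_μ(A,λ)) ≤ R_μ(Φ(A),λ), where Φ(A) = (Φ(A₁),…,Φ(Aₘ)). -/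
open Matrix
open scoped ComplexOrder

open scoped MatrixOrder

/-! With `Bᵢ = Aᵢ + μ` the claim is the harmonic-mean inequality
`Φ((∑ wᵢ Bᵢ⁻¹)⁻¹) ≤ (∑ wᵢ Φ(Bᵢ)⁻¹)⁻¹`. Put `C = ∑ wᵢ Bᵢ⁻¹`, `K = ∑ wᵢ Φ(Bᵢ)⁻¹` and `G = Φ(C⁻¹)`.
Choi's inequality `Φ(X) Φ(B)⁻¹ Φ(X) ≤ Φ(X B⁻¹ X)` at `X = C⁻¹`, summed over `i`, gives
`G K G ≤ Φ(C⁻¹ C C⁻¹) = G`, and this forces `G ≤ K⁻¹` because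
`K⁻¹ - G = (K⁻¹ - G) K (K⁻¹ - G) + (G - G K G)`.

Choi's inequality is Kadison's inequality `Φ(Y)² ≤ Φ(Y²)` for the unital positive map
`Z ↦ Φ(B)^{-1/2} Φ(B^{1/2} Z B^{1/2}) Φ(B)^{-1/2}` at `Y = B^{-1/2} X B^{-1/2}`. Kadison's
inequality in turn is the nonnegativity of a variance: if `Y = ∑ dⱼ Pⱼ` spectrally, the
`Qⱼ = Φ(Pⱼ)` are positive with sum `1`, and `T = ∑ dⱼ Qⱼ` satisfies
`∑ dⱼ² Qⱼ - T² = ∑ (dⱼ - T) Qⱼ (dⱼ - T)`. -/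

namespace Matrix

variable {𝕜 : Type*} [RCLike 𝕜] {n : Type*}

theorem posDef_sum_smul_s5 {ι : Type*} [Fintype ι] {M : ι → Matrix n n 𝕜} (hM : ∀ i, (M i).PosDef)
    {w : ι → ℝ} (hw : ∀ i, 0 ≤ w i) (hw0 : 0 < ∑ i, w i) : (∑ i, w i • M i).PosDef := by
  classical
  obtain ⟨j, -, hj⟩ :=
    Finset.exists_lt_of_sum_lt (s := .univ) (f := 0) (g := w) (by simpa using hw0)
  rw [← Finset.add_sum_erase _ _ (Finset.mem_univ j)]
  exact ((hM j).smul hj).add_posSemidef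
    (posSemidef_sum _ fun i _ => (hM i).posSemidef.smul (hw i))

variable [Fintype n] [DecidableEq n]

theorem le_inv_of_mul_mul_le {K G : Matrix n n 𝕜} (hK : K.PosDef) (hG : G.IsHermitian)
    (h : G * K * G ≤ G) : G ≤ K⁻¹ := by
  have := hK.isUnit.invertible
  have hconj := star_left_conjugate_nonneg hK.posSemidef.nonneg (K⁻¹ - G)
  have hexpand : star (K⁻¹ - G) * K * (K⁻¹ - G) = K⁻¹ - G - (G - G * K * G) := by
    simp [star_eq_conjTranspose, hG.eq, hK.inv.isHermitian.eq, sub_mul, mul_sub,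
      Matrix.mul_assoc]
  rw [hexpand] at hconj
  simpa using add_nonneg hconj (sub_nonneg.2 h)

theorem mul_self_sum_smul_le_sum_sq_smul {ι : Type*} [Fintype ι] {Q : ι → Matrix n n 𝕜}
    (hQ : ∀ j, 0 ≤ Q j) (hQ1 : ∑ j, Q j = 1) (d : ι → ℝ) :
    (∑ j, d j • Q j) * (∑ j, d j • Q j) ≤ ∑ j, d j ^ 2 • Q j := by
  set T := ∑ j, d j • Q j
  have hT : IsSelfAdjoint T :=
    isSelfAdjoint_sum _ fun j _ => (IsSelfAdjoint.all (d j)).smul (.of_nonneg (hQ j))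
  have expand : ∀ j, star (d j • 1 - T) * Q j * (d j • 1 - T) =
      d j ^ 2 • Q j - T * (d j • Q j) - d j • Q j * T + T * Q j * T := fun j => by
    simp only [star_sub, star_smul, star_one, hT.star_eq, star_trivial, sub_mul, mul_sub,
      smul_mul_assoc, mul_smul_comm, one_mul, mul_one]
    module
  have key : ∑ j, star (d j • 1 - T) * Q j * (d j • 1 - T) = ∑ j, d j ^ 2 • Q j - T * T := by
    simp only [expand, Finset.sum_add_distrib, Finset.sum_sub_distrib, ← Finset.mul_sum,
      ← Finset.sum_mul, hQ1, mul_one]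
    abel
  rw [← sub_nonneg, ← key]
  exact Finset.sum_nonneg fun j _ => star_left_conjugate_nonneg (hQ j) _

theorem IsHermitian.exists_resolution_of_identity {Y : Matrix n n 𝕜} (hY : Y.IsHermitian) :
    ∃ (d : n → ℝ) (P : n → Matrix n n 𝕜), (∀ j, 0 ≤ P j) ∧ ∑ j, P j = 1 ∧
      Y = ∑ j, d j • P j ∧ Y * Y = ∑ j, d j ^ 2 • P j := by
  set c := Unitary.conjStarAlgAut 𝕜 (Matrix n n 𝕜) hY.eigenvectorUnitary
  have hc : ∀ f : n → ℝ, c (diagonal (RCLike.ofReal ∘ f)) = ∑ j, f j • c (single j j 1) := by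
    intro f
    simp_rw [← sum_single_eq_diagonal, map_sum, RCLike.real_smul_eq_coe_smul (K := 𝕜),
      ← map_smul, smul_single, smul_eq_mul, mul_one, Function.comp_apply]
  refine ⟨hY.eigenvalues, fun j => c (single j j 1), fun j => ?_, ?_, ?_, ?_⟩
  · refine star_right_conjugate_nonneg ?_ _
    rw [← diagonal_single]
    exact (PosSemidef.diagonal (Pi.single_nonneg.mpr zero_le_one)).nonneg
  · simpa using (hc 1).symm
  · rw [← hc]
    exact hY.spectral_theorem
  · rw [← hc]
    conv_lhs => rw [hY.spectral_theorem, ← map_mul, diagonal_mul_diagonal]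
    congr
    ext
    simp [sq]

section PositiveMap

variable {Φ : Matrix n n 𝕜 →ₗ[𝕜] Matrix n n 𝕜}
  (hΦpos : ∀ X : Matrix n n 𝕜, X.PosSemidef → (Φ X).PosSemidef)
include hΦpos

theorem mul_self_map_le_map_mul_self (hΦ1 : Φ 1 = 1) {Y : Matrix n n 𝕜} (hY : Y.IsHermitian) :
    Φ Y * Φ Y ≤ Φ (Y * Y) := by
  obtain ⟨d, P, hP, hP1, rfl, hYY⟩ := hY.exists_resolution_of_identity
  have hQ1 : ∑ j, Φ (P j) = 1 := by rw [← map_sum, hP1, hΦ1]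
  simpa [hYY, map_sum, LinearMap.map_smul_of_tower] using
    mul_self_sum_smul_le_sum_sq_smul (fun j => (hΦpos _ (hP j).posSemidef).nonneg) hQ1 d

theorem map_mul_inv_mul_le {X B : Matrix n n 𝕜} (hX : X.IsHermitian) (hB : B.PosDef)
    (hΦB : (Φ B).PosDef) : Φ X * (Φ B)⁻¹ * Φ X ≤ Φ (X * B⁻¹ * X) := by
  set R := CFC.sqrt B
  set S := CFC.sqrt (Φ B)
  have hR : R.PosDef := hB.isStrictlyPositive.sqrt.posDef
  have hS : S.PosDef := hΦB.isStrictlyPositive.sqrt.posDef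
  have hRR : R * R = B := CFC.sqrt_mul_sqrt_self B hB.posSemidef.nonneg
  have hSS : S * S = Φ B := CFC.sqrt_mul_sqrt_self _ hΦB.posSemidef.nonneg
  have := hR.isUnit.invertible
  have := hS.isUnit.invertible
  set Ψ := LinearMap.mulLeftRight 𝕜 (S⁻¹, S⁻¹) ∘ₗ Φ ∘ₗ LinearMap.mulLeftRight 𝕜 (R, R)
  have hΨ : ∀ Z, Ψ Z = S⁻¹ * Φ (R * Z * R) * S⁻¹ := fun Z => rfl
  have hΨpos : ∀ Z : Matrix n n 𝕜, Z.PosSemidef → (Ψ Z).PosSemidef := fun Z hZ => by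
    simpa [hΨ, hR.isHermitian.eq, hS.inv.isHermitian.eq] using
      (hΦpos _ (hZ.mul_mul_conjTranspose_same R)).mul_mul_conjTranspose_same S⁻¹
  have hΨ1 : Ψ 1 = 1 := by simp [hΨ, hRR, ← hSS]
  have hY : (R⁻¹ * X * R⁻¹).IsHermitian := by
    simpa [hR.inv.isHermitian.eq, Matrix.mul_assoc] using
      isHermitian_mul_mul_conjTranspose R⁻¹ hX
  have hkad := star_left_conjugate_le_conjugate (mul_self_map_le_map_mul_self hΨpos hΨ1 hY) S
  rw [← hSS, ← hRR, Matrix.mul_inv_rev, Matrix.mul_inv_rev]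
  simpa [hΨ, star_eq_conjTranspose, hS.isHermitian.eq, Matrix.mul_assoc] using hkad

theorem map_inv_sum_smul_inv_le {ι : Type*} [Fintype ι] {B : ι → Matrix n n 𝕜}
    (hB : ∀ i, (B i).PosDef) (hΦB : ∀ i, (Φ (B i)).PosDef) {w : ι → ℝ} (hw : ∀ i, 0 ≤ w i)
    (hw0 : 0 < ∑ i, w i) : Φ (∑ i, w i • (B i)⁻¹)⁻¹ ≤ (∑ i, w i • (Φ (B i))⁻¹)⁻¹ := by
  set C := ∑ i, w i • (B i)⁻¹
  set K := ∑ i, w i • (Φ (B i))⁻¹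
  have hC : C.PosDef := posDef_sum_smul_s5 (fun i => (hB i).inv) hw hw0
  have := hC.isUnit.invertible
  refine le_inv_of_mul_mul_le (posDef_sum_smul_s5 (fun i => (hΦB i).inv) hw hw0)
    (hΦpos _ hC.inv.posSemidef).isHermitian ?_
  calc Φ C⁻¹ * K * Φ C⁻¹ = ∑ i, w i • (Φ C⁻¹ * (Φ (B i))⁻¹ * Φ C⁻¹) := by
        simp [K, Finset.mul_sum, Finset.sum_mul]
    _ ≤ ∑ i, w i • Φ (C⁻¹ * (B i)⁻¹ * C⁻¹) := Finset.sum_le_sum fun i _ =>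
        smul_le_smul_of_nonneg_left (map_mul_inv_mul_le hΦpos hC.inv.isHermitian (hB i) (hΦB i))
          (hw i)
    _ = Φ (C⁻¹ * C * C⁻¹) := by
        simp [C, Finset.mul_sum, Finset.sum_mul, map_sum, LinearMap.map_smul_of_tower]
    _ = Φ C⁻¹ := by rw [inv_mul_of_invertible, Matrix.one_mul]

end PositiveMap

end Matrix

/-- For a unital positive linear map `Φ`: `Φ(R_μ(A,w)) ≤ R_μ(Φ(A),w)` (Loewner order). -/
theorem map_resAvg_le {n : Type*} [Fintype n] [DecidableEq n] {m : ℕ}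
    (Φ : Matrix n n ℂ →ₗ[ℂ] Matrix n n ℂ)
    (hΦpos : ∀ X : Matrix n n ℂ, X.PosSemidef → (Φ X).PosSemidef)
    (hΦ1 : Φ 1 = 1)
    (A : Fin m → Matrix n n ℂ) (hA : ∀ i, (A i).PosDef)
    (w : Fin m → ℝ) (hw : ∀ i, 0 ≤ w i) (hw1 : ∑ i, w i = 1) (μ : ℝ) (hμ : 0 < μ) :
    (resAvg μ (fun i => Φ (A i)) w - Φ (resAvg μ A w)).PosSemidef := by
  set B : Fin m → Matrix n n ℂ := fun i => A i + μ • 1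
  have hμ1 : (μ • 1 : Matrix n n ℂ).PosDef := PosDef.one.smul hμ
  have hΦB : ∀ i, Φ (B i) = Φ (A i) + μ • 1 := fun i => by
    simp [B, LinearMap.map_smul_of_tower, hΦ1]
  have hres : resAvg μ (fun i => Φ (A i)) w - Φ (resAvg μ A w) =
      (∑ i, w i • (Φ (B i))⁻¹)⁻¹ - Φ (∑ i, w i • (B i)⁻¹)⁻¹ := by
    simp [resAvg, hΦB, LinearMap.map_smul_of_tower, hΦ1, B]
  rw [hres, ← Matrix.le_iff]
  exact map_inv_sum_smul_inv_le hΦpos (fun i => (hA i).add_posSemidef hμ1.posSemidef)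
    (fun i => hΦB i ▸ hμ1.posSemidef_add (hΦpos _ (hA i).posSemidef)) hw (by simp [hw1])
end

section
/- For positive definite matrices A, B and μ ≥ 0, the two-variable A♯H-mean with equal weights equals the shifted geometric mean: L_μ(A,B,½,½) = ((A+μI) ♯ (B+μI)) − μI, where L_μ(A,B,½,½) = (½(A+μI)+½(B+μI)) ♯ (½(A+μI)⁻¹+½(B+μI)⁻¹)⁻¹ − μI. -/
open Matrix
open scoped ComplexOrder

namespace AHaux
variable {n : Type*} [Fintype n] [DecidableEq n]

open scoped MatrixOrder in
lemma msqrt_eq {A : Matrix n n ℂ} (hA : A.PosSemidef) : msqrt A = CFC.sqrt A := by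
  rw [msqrt, CFC.sqrt_eq_real_sqrt A hA.nonneg, cfcₙ_eq_cfc]

open scoped MatrixOrder in
lemma msqrt_posSemidef {A : Matrix n n ℂ} (hA : A.PosSemidef) : (msqrt A).PosSemidef := by
  rw [msqrt_eq hA]; exact (CFC.sqrt_nonneg A).posSemidef

open scoped MatrixOrder in
lemma msqrt_mul_self {A : Matrix n n ℂ} (hA : A.PosSemidef) : msqrt A * msqrt A = A := by
  rw [msqrt_eq hA]; exact CFC.sqrt_mul_sqrt_self A hA.nonneg

open scoped MatrixOrder in
lemma eq_msqrt_of_sq {X A : Matrix n n ℂ} (hX : X.PosSemidef) (hA : A.PosSemidef)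
    (h : X * X = A) : X = msqrt A := by
  rw [msqrt_eq hA]; exact (CFC.sqrt_unique h hX.nonneg).symm

lemma posSemidef_smul {A : Matrix n n ℂ} (hA : A.PosSemidef) {r : ℝ} (hr : 0 ≤ r) :
    (r • A).PosSemidef := by
  constructor
  · simp [Matrix.IsHermitian, Matrix.conjTranspose_smul, hA.1.eq]
  · intro x
    exact (hA.smul hr).2 x

lemma isUnit_msqrt_det {A : Matrix n n ℂ} (hA : A.PosDef) : IsUnit (msqrt A).det := by
  have h : (msqrt A).det * (msqrt A).det = A.det := by
    rw [← Matrix.det_mul, msqrt_mul_self hA.posSemidef]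
  have hd : A.det ≠ 0 := ne_of_gt hA.det_pos
  rw [isUnit_iff_ne_zero]
  intro h0
  rw [h0, mul_zero] at h
  exact hd h.symm

lemma smul_inv' {M : Matrix n n ℂ} (hM : IsUnit M.det) {r : ℝ} (hr : r ≠ 0) :
    (r • M)⁻¹ = r⁻¹ • M⁻¹ := by
  apply Matrix.inv_eq_right_inv
  rw [smul_mul_smul_comm, mul_inv_cancel₀ hr, Matrix.mul_nonsing_inv _ hM, one_smul]

lemma msqrt_smul {A : Matrix n n ℂ} (hA : A.PosSemidef) {s : ℝ} (hs : 0 ≤ s) :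
    msqrt (s • A) = Real.sqrt s • msqrt A := by
  refine (eq_msqrt_of_sq (posSemidef_smul (msqrt_posSemidef hA) (Real.sqrt_nonneg s))
    (posSemidef_smul hA hs) ?_).symm
  rw [smul_mul_smul_comm, msqrt_mul_self hA, Real.mul_self_sqrt hs]

/-- conjugation of PSD by hermitian inverse -/
lemma conj_inv_posSemidef {S B : Matrix n n ℂ} (hS : S.IsHermitian) (hB : B.PosSemidef) :
    (S⁻¹ * B * S⁻¹).PosSemidef := by
  have : S⁻¹ * B * S⁻¹ = S⁻¹ * B * (S⁻¹)ᴴ := by rw [hS.inv.eq]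
  rw [this]
  exact hB.mul_mul_conjTranspose_same S⁻¹

lemma geom_riccati {A B : Matrix n n ℂ} (hA : A.PosDef) (hB : B.PosDef) :
    (geom A B).PosSemidef ∧ IsUnit (geom A B).det ∧ geom A B * A⁻¹ * geom A B = B := by
  set S := msqrt A with hSdef
  have hSpsd : S.PosSemidef := msqrt_posSemidef hA.posSemidef
  have hSH : S.IsHermitian := hSpsd.1
  have hSS : S * S = A := msqrt_mul_self hA.posSemidef
  have hSu : IsUnit S.det := isUnit_msqrt_det hA
  set M := S⁻¹ * B * S⁻¹ with hMdef
  have hMpsd : M.PosSemidef := conj_inv_posSemidef hSH hB.posSemidef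
  set T := msqrt M with hTdef
  have hTpsd : T.PosSemidef := msqrt_posSemidef hMpsd
  have hTT : T * T = M := msqrt_mul_self hMpsd
  have hgeom : geom A B = S * T * S := rfl
  have hMu : IsUnit M.det := by
    have hi : IsUnit (S⁻¹).det := (Matrix.isUnit_nonsing_inv_det _ hSu)
    have hb : IsUnit B.det := (Matrix.isUnit_iff_isUnit_det B).mp hB.isUnit
    simpa [hMdef, Matrix.det_mul] using (hi.mul hb).mul hi
  have hTu : IsUnit T.det := by
    have h : T.det * T.det = M.det := by rw [← Matrix.det_mul, hTT]
    rcases hMu with ⟨u, hu⟩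
    rw [isUnit_iff_ne_zero]
    intro h0
    rw [h0, mul_zero] at h
    exact (isUnit_iff_ne_zero.mp (hu ▸ Units.isUnit u)) h.symm
  refine ⟨?_, ?_, ?_⟩
  · rw [hgeom]
    have : S * T * S = S * T * Sᴴ := by rw [hSH.eq]
    rw [this]
    exact hTpsd.mul_mul_conjTranspose_same S
  · rw [hgeom]
    simp only [Matrix.det_mul]
    exact (hSu.mul hTu).mul hSu
  · rw [hgeom, ← hSS, Matrix.mul_inv_rev]
    calc S * T * S * (S⁻¹ * S⁻¹) * (S * T * S)
        = S * T * ((S * S⁻¹) * (S⁻¹ * S)) * (T * S) := by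
          simp only [Matrix.mul_assoc]
      _ = S * (T * T) * S := by
          rw [Matrix.mul_nonsing_inv _ hSu, Matrix.nonsing_inv_mul _ hSu]
          simp only [Matrix.mul_one, Matrix.one_mul, Matrix.mul_assoc]
      _ = S * (S⁻¹ * B * S⁻¹) * S := by rw [hTT]
      _ = (S * S⁻¹) * B * (S⁻¹ * S) := by simp only [Matrix.mul_assoc]
      _ = B := by
          rw [Matrix.mul_nonsing_inv _ hSu, Matrix.nonsing_inv_mul _ hSu,
            Matrix.one_mul, Matrix.mul_one]

lemma riccati_unique {A B X : Matrix n n ℂ} (hA : A.PosDef) (hX : X.PosSemidef)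
    (hXA : X * A⁻¹ * X = B) : X = geom A B := by
  set S := msqrt A with hSdef
  have hSpsd : S.PosSemidef := msqrt_posSemidef hA.posSemidef
  have hSH : S.IsHermitian := hSpsd.1
  have hSS : S * S = A := msqrt_mul_self hA.posSemidef
  have hSu : IsUnit S.det := isUnit_msqrt_det hA
  have hW : (S⁻¹ * X * S⁻¹).PosSemidef := conj_inv_posSemidef hSH hX
  have hsq : (S⁻¹ * X * S⁻¹) * (S⁻¹ * X * S⁻¹) = S⁻¹ * B * S⁻¹ := by
    rw [← hXA, ← hSS, Matrix.mul_inv_rev]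
    simp only [Matrix.mul_assoc]
  have hM : (S⁻¹ * B * S⁻¹).PosSemidef := by
    rw [← hsq]
    have := hW.pow 2
    simpa [pow_two] using this
  have hWsqrt : S⁻¹ * X * S⁻¹ = msqrt (S⁻¹ * B * S⁻¹) := eq_msqrt_of_sq hW hM hsq
  have hgeom : geom A B = S * msqrt (S⁻¹ * B * S⁻¹) * S := rfl
  rw [hgeom, ← hWsqrt]
  calc X = (S * S⁻¹) * X * (S⁻¹ * S) := by
        rw [Matrix.mul_nonsing_inv _ hSu, Matrix.nonsing_inv_mul _ hSu,
          Matrix.one_mul, Matrix.mul_one]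
    _ = S * (S⁻¹ * X * S⁻¹) * S := by simp only [Matrix.mul_assoc]

lemma geom_add_harm {C D : Matrix n n ℂ} (hC : C.PosDef) (hD : D.PosDef) :
    geom (C + D) (C⁻¹ + D⁻¹)⁻¹ = geom C D := by
  obtain ⟨hXpsd, hXu, hX⟩ := geom_riccati hC hD
  set X := geom C D with hXdef
  have hCu : IsUnit C.det := (Matrix.isUnit_iff_isUnit_det C).mp hC.isUnit
  have hDu : IsUnit D.det := (Matrix.isUnit_iff_isUnit_det D).mp hD.isUnit
  have hCD : (C + D).PosDef := hC.add hD
  -- X⁻¹ * C * X⁻¹ = D⁻¹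
  have h1 : X⁻¹ * C * X⁻¹ = D⁻¹ := by
    rw [← hX, Matrix.mul_inv_rev, Matrix.mul_inv_rev,
      Matrix.nonsing_inv_nonsing_inv _ hCu]
    simp only [Matrix.mul_assoc]
  -- X⁻¹ * D * X⁻¹ = C⁻¹
  have h2 : X⁻¹ * D * X⁻¹ = C⁻¹ := by
    rw [← hX]
    calc X⁻¹ * (X * C⁻¹ * X) * X⁻¹
        = (X⁻¹ * X) * C⁻¹ * (X * X⁻¹) := by simp only [Matrix.mul_assoc]
      _ = C⁻¹ := by
        rw [Matrix.nonsing_inv_mul _ hXu, Matrix.mul_nonsing_inv _ hXu,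
          Matrix.one_mul, Matrix.mul_one]
  have h3 : X⁻¹ * (C + D) * X⁻¹ = C⁻¹ + D⁻¹ := by
    rw [Matrix.mul_add, Matrix.add_mul, h1, h2, add_comm]
  have key : X * (C + D)⁻¹ * X = (C⁻¹ + D⁻¹)⁻¹ := by
    rw [← h3, Matrix.mul_inv_rev, Matrix.mul_inv_rev,
      Matrix.nonsing_inv_nonsing_inv _ hXu]
    simp only [Matrix.mul_assoc]
  exact (riccati_unique hCD hXpsd key).symm

lemma geom_smul {A B : Matrix n n ℂ} (hA : A.PosDef) (hB : B.PosDef) {s t : ℝ}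
    (hs : 0 < s) (ht : 0 < t) :
    geom (s • A) (t • B) = Real.sqrt (s * t) • geom A B := by
  have hSu : IsUnit (msqrt A).det := isUnit_msqrt_det hA
  have hsqs : (0:ℝ) < Real.sqrt s := Real.sqrt_pos.mpr hs
  rw [geom, geom, msqrt_smul hA.posSemidef hs.le,
    smul_inv' hSu (ne_of_gt hsqs)]
  set S := msqrt A
  have e1 : (Real.sqrt s)⁻¹ • S⁻¹ * (t • B) * ((Real.sqrt s)⁻¹ • S⁻¹)
      = (t / s) • (S⁻¹ * B * S⁻¹) := by
    rw [smul_mul_smul_comm, smul_mul_smul_comm]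
    congr 1
    rw [← Real.sqrt_mul_self hs.le]
    field_simp
    rw [Real.sq_sqrt (Real.sqrt_nonneg _)]
  rw [e1]
  have hM : (S⁻¹ * B * S⁻¹).PosSemidef :=
    conj_inv_posSemidef (msqrt_posSemidef hA.posSemidef).1 hB.posSemidef
  rw [msqrt_smul hM (by positivity : (0:ℝ) ≤ t / s)]
  rw [smul_mul_smul_comm, smul_mul_smul_comm]
  have hscal : Real.sqrt s * Real.sqrt (t / s) * Real.sqrt s = Real.sqrt (s * t) := by
    rw [Real.sqrt_div ht.le, Real.sqrt_mul hs.le]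
    field_simp
  rw [hscal]

end AHaux

/-- The equal-weight two-variable `𝒜♯ℋ`-mean equals the shifted geometric mean:
`L_μ(A,B,½,½) = ((A+μI) ♯ (B+μI)) − μI` for positive definite `A, B` and `μ ≥ 0`. -/
theorem ahMean_two_eq_shifted_geom {n : Type*} [Fintype n] [DecidableEq n]
    (A B : Matrix n n ℂ) (hA : A.PosDef) (hB : B.PosDef) (μ : ℝ) (hμ : 0 ≤ μ) :
    geom ((1 / 2 : ℝ) • (A + μ • (1 : Matrix n n ℂ)) + (1 / 2 : ℝ) • (B + μ • (1 : Matrix n n ℂ)))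
        ((1 / 2 : ℝ) • (A + μ • (1 : Matrix n n ℂ))⁻¹
          + (1 / 2 : ℝ) • (B + μ • (1 : Matrix n n ℂ))⁻¹)⁻¹
      - μ • (1 : Matrix n n ℂ)
    = geom (A + μ • (1 : Matrix n n ℂ)) (B + μ • (1 : Matrix n n ℂ)) - μ • (1 : Matrix n n ℂ) := by
  have hmu : (μ • (1 : Matrix n n ℂ)).PosSemidef := AHaux.posSemidef_smul Matrix.PosSemidef.one hμ
  set C := A + μ • (1 : Matrix n n ℂ) with hCdef
  set D := B + μ • (1 : Matrix n n ℂ) with hDdef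
  have hC : C.PosDef := hA.add_posSemidef hmu
  have hD : D.PosDef := hB.add_posSemidef hmu
  have hCD : (C + D).PosDef := hC.add hD
  have hH : (C⁻¹ + D⁻¹).PosDef := hC.inv.add hD.inv
  have hHu : IsUnit (C⁻¹ + D⁻¹).det := (Matrix.isUnit_iff_isUnit_det _).mp hH.isUnit
  have e1 : (1/2:ℝ) • C + (1/2:ℝ) • D = (1/2:ℝ) • (C + D) := (smul_add _ _ _).symm
  have e2 : ((1/2:ℝ) • C⁻¹ + (1/2:ℝ) • D⁻¹)⁻¹ = (2:ℝ) • (C⁻¹ + D⁻¹)⁻¹ := by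
    rw [← smul_add, AHaux.smul_inv' hHu (by norm_num : (1/2:ℝ) ≠ 0)]
    norm_num
  rw [e1, e2, AHaux.geom_smul hCD hH.inv (by norm_num) (by norm_num),
    AHaux.geom_add_harm hC hD]
  have : Real.sqrt (1/2 * 2) = 1 := by norm_num
  rw [this, one_smul]
end

section
/- Sectorial comparison for the harmonic mean: if A₁,…,Aₘ are n×n matrices with numerical range contained in the sector S_α = {z : Re z ≥ 0, |Im z| ≤ tan(α) Re z} for some α ∈ [0,π/2), and λ weights summing to 1, then (∑ᵢ λᵢ (Re Aᵢ)⁻¹)⁻¹ ≤ sec²(α) · Re((∑ᵢ λᵢ Aᵢ⁻¹)⁻¹). -/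
open Matrix
open scoped ComplexOrder

/-- The real part `Re A = (A + Aᴴ)/2` of a matrix. -/
noncomputable def reMat {n : Type*} [Fintype n] [DecidableEq n]
    (A : Matrix n n ℂ) : Matrix n n ℂ :=
  (1 / 2 : ℂ) • (A + Aᴴ)

/-- `A ∈ Π_{n,α}`: the numerical range of `A` is contained in the sector
`S_α = {z : Re z ≥ 0, |Im z| ≤ tan(α) Re z}`, with `Re ⟨Ax,x⟩ > 0` for `x ≠ 0`
(so that `A` is sectorial, in particular accretive and invertible). -/
def InSector {n : Type*} [Fintype n] [DecidableEq n] (α : ℝ) (A : Matrix n n ℂ) : Prop :=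
  ∀ x : n → ℂ, x ≠ 0 →
    0 < (dotProduct (star x) (A *ᵥ x)).re ∧
    |(dotProduct (star x) (A *ᵥ x)).im| ≤ Real.tan α * (dotProduct (star x) (A *ᵥ x)).re

/-!
Write `A = H + iK` with `H = Re A` positive definite and `K` Hermitian. Then
`A H⁻¹ Aᴴ = H + K H⁻¹ K` and `Re (A⁻¹) = A⁻¹ H A⁻ᴴ`, so conjugating by `A⁻¹` gives
`H⁻¹ = Re (A⁻¹) + A⁻¹ (K H⁻¹ K) A⁻ᴴ`. The sector condition `|x*Kx| ≤ tan α · x*Hx` implies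
`K H⁻¹ K ≤ tan² α · H` by a Cauchy–Schwarz argument, whence
`Re (A⁻¹) ≤ (Re A)⁻¹ ≤ sec² α · Re (A⁻¹)`.

The sector is stable under inversion and convex combinations, so `B = ∑ wᵢ Aᵢ⁻¹` lies in it and
`Re B = ∑ wᵢ Re (Aᵢ⁻¹) ≤ ∑ wᵢ (Re Aᵢ)⁻¹`. Inversion reverses the Loewner order, hence
`(∑ wᵢ (Re Aᵢ)⁻¹)⁻¹ ≤ (Re B)⁻¹ ≤ sec² α · Re (B⁻¹)`.
-/

open scoped MatrixOrder

namespace Matrix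

variable {𝕜 n : Type*} [RCLike 𝕜] [Fintype n]

open RCLike

theorem IsHermitian.posSemidef_of_re_nonneg {M : Matrix n n 𝕜} (hM : M.IsHermitian)
    (h : ∀ x : n → 𝕜, 0 ≤ re (star x ⬝ᵥ M *ᵥ x)) : M.PosSemidef :=
  .of_dotProduct_mulVec_nonneg hM fun x =>
    nonneg_iff.mpr ⟨h x, hM.im_star_dotProduct_mulVec_self x⟩

theorem IsHermitian.posDef_of_re_pos {M : Matrix n n 𝕜} (hM : M.IsHermitian)
    (h : ∀ x : n → 𝕜, x ≠ 0 → 0 < re (star x ⬝ᵥ M *ᵥ x)) : M.PosDef :=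
  .of_dotProduct_mulVec_pos hM fun x hx =>
    pos_iff.mpr ⟨h x hx, hM.im_star_dotProduct_mulVec_self x⟩

theorem star_dotProduct_conjTranspose_mulVec (M : Matrix n n 𝕜) (x y : n → 𝕜) :
    star x ⬝ᵥ Mᴴ *ᵥ y = star (star y ⬝ᵥ M *ᵥ x) := by
  rw [star_dotProduct, star_mulVec, ← dotProduct_mulVec, conjTranspose_conjTranspose]

theorem IsHermitian.star_dotProduct_mulVec_comm {M : Matrix n n 𝕜} (hM : M.IsHermitian)
    (x y : n → 𝕜) : star y ⬝ᵥ M *ᵥ x = star (star x ⬝ᵥ M *ᵥ y) := by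
  rw [← star_dotProduct_conjTranspose_mulVec, hM.eq]

theorem polarization_star_dotProduct_mulVec (M : Matrix n n 𝕜) (x y : n → 𝕜) :
    star (x + y) ⬝ᵥ M *ᵥ (x + y) - star (x - y) ⬝ᵥ M *ᵥ (x - y) =
      2 * (star x ⬝ᵥ M *ᵥ y + star y ⬝ᵥ M *ᵥ x) := by
  simp only [star_add, star_sub, mulVec_add, mulVec_sub, add_dotProduct, sub_dotProduct,
    dotProduct_add, dotProduct_sub]
  ring

theorem parallelogram_law_star_dotProduct_mulVec (M : Matrix n n 𝕜) (x y : n → 𝕜) :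
    star (x + y) ⬝ᵥ M *ᵥ (x + y) + star (x - y) ⬝ᵥ M *ᵥ (x - y) =
      2 * (star x ⬝ᵥ M *ᵥ x + star y ⬝ᵥ M *ᵥ y) := by
  simp only [star_add, star_sub, mulVec_add, mulVec_sub, add_dotProduct, sub_dotProduct,
    dotProduct_add, dotProduct_sub]
  ring

theorem IsHermitian.two_mul_re_star_dotProduct_mulVec_le {H K : Matrix n n 𝕜}
    (hK : K.IsHermitian) {t : ℝ}
    (hKH : ∀ x, |re (star x ⬝ᵥ K *ᵥ x)| ≤ t * re (star x ⬝ᵥ H *ᵥ x)) (x y : n → 𝕜) :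
    2 * re (star x ⬝ᵥ K *ᵥ y) ≤ t * (re (star x ⬝ᵥ H *ᵥ x) + re (star y ⬝ᵥ H *ᵥ y)) := by
  have hK2 := congrArg re (polarization_star_dotProduct_mulVec K x y)
  have hH2 := congrArg re (parallelogram_law_star_dotProduct_mulVec H x y)
  rw [hK.star_dotProduct_mulVec_comm x y] at hK2
  simp only [map_sub, map_add, ofNat_mul_re, star_def, conj_re] at hK2 hH2
  obtain ⟨-, hsum⟩ := abs_le.mp (hKH (x + y))
  obtain ⟨hdiff, -⟩ := abs_le.mp (hKH (x - y))
  linear_combination (hsum + hdiff - hK2 + t * hH2) / 2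

theorem IsHermitian.mul_inv_mul_le_sq_smul [DecidableEq n] {H K : Matrix n n 𝕜}
    (hK : K.IsHermitian) (hH : H.PosDef) {t : ℝ}
    (hKH : ∀ x, |re (star x ⬝ᵥ K *ᵥ x)| ≤ t * re (star x ⬝ᵥ H *ᵥ x)) :
    K * H⁻¹ * K ≤ t ^ 2 • H := by
  have hKHK : (K * H⁻¹ * K).IsHermitian := by
    simpa only [hK.eq] using isHermitian_mul_mul_conjTranspose K hH.inv.isHermitian
  refine ((hH.isHermitian.smul (.all (t ^ 2))).sub hKHK).posSemidef_of_re_nonneg fun x => ?_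
  have hHdet : IsUnit H.det := (isUnit_iff_isUnit_det H).mp hH.isUnit
  set y := H⁻¹ *ᵥ (K *ᵥ x) with hy
  set c := re (star x ⬝ᵥ K *ᵥ y)
  have hHy : H *ᵥ y = K *ᵥ x := by rw [hy, mulVec_mulVec, mul_nonsing_inv H hHdet, one_mulVec]
  have hc_nonneg : 0 ≤ c := by
    have := hH.inv.posSemidef.re_dotProduct_nonneg (K *ᵥ x)
    rwa [star_mulVec, ← dotProduct_mulVec, hK.eq] at this
  have hyHy : re (star y ⬝ᵥ H *ᵥ y) = c := by
    rw [hHy, hK.star_dotProduct_mulVec_comm, star_def, conj_re]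
  -- the bound at `(x, s • y)` reads `2 s c ≤ t (x*Hx + s² c)`; its discriminant gives `c ≤ t² x*Hx`
  have hquad : ∀ s : ℝ, 0 ≤ t * c * (s * s) + -2 * c * s + t * re (star x ⬝ᵥ H *ᵥ x) := by
    intro s
    have := hK.two_mul_re_star_dotProduct_mulVec_le hKH x ((s : 𝕜) • y)
    simp only [mulVec_smul, dotProduct_smul, star_smul, smul_dotProduct, smul_eq_mul,
      star_def, conj_ofReal, re_ofReal_mul, hyHy] at this
    linear_combination this
  have hdisc := discrim_le_zero hquad
  have hform : re (star x ⬝ᵥ (t ^ 2 • H - K * H⁻¹ * K) *ᵥ x) =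
      t ^ 2 * re (star x ⬝ᵥ H *ᵥ x) - c := by
    rw [sub_mulVec, dotProduct_sub, map_sub, smul_mulVec, dotProduct_smul, smul_re,
      ← mulVec_mulVec, ← mulVec_mulVec]
  rw [hform]
  rw [discrim] at hdisc
  have hx := hH.posSemidef.re_dotProduct_nonneg x
  rcases hc_nonneg.eq_or_lt with hc | hc
  · nlinarith [mul_nonneg (sq_nonneg t) hx]
  · nlinarith

theorem PosDef.inv_anti [DecidableEq n] {A B : Matrix n n 𝕜} (hA : A.PosDef) (hAB : A ≤ B) :
    B⁻¹ ≤ A⁻¹ := by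
  have hB : B.PosDef := by simpa using hA.add_posSemidef hAB
  have := hA.inv.isUnit.invertible
  have := hB.isUnit.invertible
  rw [le_iff] at hAB ⊢
  -- both differences are Schur complements in `fromBlocks B 1 1 A⁻¹`
  have hblock := (PosDef.fromBlocks₂₂ B 1 hA.inv).mpr
    (by simpa [nonsing_inv_nonsing_inv _ ((isUnit_iff_isUnit_det A).mp hA.isUnit)] using hAB)
  simpa using (PosDef.fromBlocks₁₁ 1 A⁻¹ hB).mp (by simpa using hblock)

end Matrix

section

variable {n : Type*}

noncomputable def imMat (A : Matrix n n ℂ) : Matrix n n ℂ :=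
  (2 * Complex.I)⁻¹ • (A - Aᴴ)

theorem imMat_isHermitian (A : Matrix n n ℂ) : (imMat A).IsHermitian := by
  rw [IsHermitian, imMat, conjTranspose_smul, conjTranspose_sub, conjTranspose_conjTranspose,
    ← neg_sub, smul_neg, ← neg_smul]
  congr 1
  simp

variable [Fintype n]

theorem star_dotProduct_imMat_mulVec (A : Matrix n n ℂ) (x : n → ℂ) :
    star x ⬝ᵥ imMat A *ᵥ x = (star x ⬝ᵥ A *ᵥ x).im := by
  rw [imMat, smul_mulVec, dotProduct_smul, sub_mulVec, dotProduct_sub,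
    star_dotProduct_conjTranspose_mulVec, Complex.star_def, Complex.sub_conj, smul_eq_mul]
  push_cast
  field_simp

variable [DecidableEq n]

theorem reMat_isHermitian (A : Matrix n n ℂ) : (reMat A).IsHermitian := by
  simp [reMat, IsHermitian, conjTranspose_smul, add_comm]

theorem reMat_add_I_smul_imMat (A : Matrix n n ℂ) : reMat A + Complex.I • imMat A = A := by
  rw [reMat, imMat, smul_smul, show Complex.I * (2 * Complex.I)⁻¹ = 1 / 2 by field_simp]
  module

theorem star_dotProduct_reMat_mulVec (A : Matrix n n ℂ) (x : n → ℂ) :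
    star x ⬝ᵥ reMat A *ᵥ x = (star x ⬝ᵥ A *ᵥ x).re := by
  rw [reMat, smul_mulVec, dotProduct_smul, add_mulVec, dotProduct_add,
    star_dotProduct_conjTranspose_mulVec, Complex.star_def, Complex.add_conj]
  simp

theorem reMat_smul (r : ℝ) (A : Matrix n n ℂ) : reMat (r • A) = r • reMat A := by
  rw [reMat, reMat, conjTranspose_smul, star_trivial, ← smul_add, smul_comm]

theorem reMat_sum {ι : Type*} (s : Finset ι) (A : ι → Matrix n n ℂ) :
    reMat (∑ i ∈ s, A i) = ∑ i ∈ s, reMat (A i) := by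
  simp only [reMat, conjTranspose_sum, ← Finset.sum_add_distrib, Finset.smul_sum]

theorem reMat_inv {A : Matrix n n ℂ} (hA : IsUnit A) : reMat A⁻¹ = A⁻¹ * reMat A * A⁻¹ᴴ := by
  have hA' : IsUnit A.det := (isUnit_iff_isUnit_det A).mp hA
  have hAH : IsUnit Aᴴ.det := by rw [det_conjTranspose]; exact hA'.star
  rw [reMat, reMat, Matrix.mul_smul, Matrix.smul_mul, Matrix.mul_add, Matrix.add_mul,
    nonsing_inv_mul _ hA', Matrix.one_mul, conjTranspose_nonsing_inv, Matrix.mul_assoc,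
    mul_nonsing_inv _ hAH, Matrix.mul_one, add_comm]

theorem mul_inv_reMat_mul_conjTranspose {A : Matrix n n ℂ} (hH : IsUnit (reMat A)) :
    A * (reMat A)⁻¹ * Aᴴ = reMat A + imMat A * (reMat A)⁻¹ * imMat A := by
  rw [isUnit_iff_isUnit_det] at hH
  have hA := reMat_add_I_smul_imMat A
  have hAH : Aᴴ = reMat A - Complex.I • imMat A := by
    conv_lhs => rw [← hA]
    rw [conjTranspose_add, conjTranspose_smul, (reMat_isHermitian A).eq,
      (imMat_isHermitian A).eq, Complex.star_def, Complex.conj_I, neg_smul, ← sub_eq_add_neg]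
  rw [hAH]
  nth_rewrite 1 [← hA]
  simp only [Matrix.add_mul, Matrix.mul_sub, Matrix.smul_mul, Matrix.mul_smul,
    mul_nonsing_inv _ hH, Matrix.one_mul, Matrix.mul_assoc, nonsing_inv_mul _ hH, Matrix.mul_one,
    smul_add, smul_smul, Complex.I_mul_I]
  module

theorem inv_reMat_eq {A : Matrix n n ℂ} (hA : IsUnit A) (hH : IsUnit (reMat A)) :
    (reMat A)⁻¹ = reMat A⁻¹ + A⁻¹ * (imMat A * (reMat A)⁻¹ * imMat A) * A⁻¹ᴴ := by
  have hA' : IsUnit A.det := (isUnit_iff_isUnit_det A).mp hA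
  have hAH : IsUnit Aᴴ.det := by rw [det_conjTranspose]; exact hA'.star
  rw [reMat_inv hA, ← Matrix.add_mul, ← Matrix.mul_add, ← mul_inv_reMat_mul_conjTranspose hH,
    conjTranspose_nonsing_inv, ← Matrix.mul_assoc, ← Matrix.mul_assoc, nonsing_inv_mul _ hA',
    Matrix.one_mul, Matrix.mul_assoc, mul_nonsing_inv _ hAH, Matrix.mul_one]

theorem isUnit_of_posDef_reMat {A : Matrix n n ℂ} (hH : (reMat A).PosDef) : IsUnit A := by
  rw [isUnit_iff_isUnit_det, isUnit_iff_ne_zero]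
  intro hdet
  obtain ⟨v, hv, hAv⟩ := exists_mulVec_eq_zero_iff.mpr hdet
  have := hH.re_dotProduct_pos hv
  simp [star_dotProduct_reMat_mulVec, hAv] at this

theorem reMat_inv_le_inv_reMat {A : Matrix n n ℂ} (hH : (reMat A).PosDef) :
    reMat A⁻¹ ≤ (reMat A)⁻¹ := by
  rw [inv_reMat_eq (isUnit_of_posDef_reMat hH) hH.isUnit]
  refine le_add_of_nonneg_right (nonneg_iff_posSemidef.mpr ?_)
  refine PosSemidef.mul_mul_conjTranspose_same ?_ _
  simpa only [(imMat_isHermitian A).eq] using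
    hH.inv.posSemidef.conjTranspose_mul_mul_same (imMat A)

theorem inv_reMat_le_smul_reMat_inv {A : Matrix n n ℂ} (hH : (reMat A).PosDef) {t : ℝ}
    (hK : ∀ x, |RCLike.re (star x ⬝ᵥ imMat A *ᵥ x)| ≤ t * RCLike.re (star x ⬝ᵥ reMat A *ᵥ x)) :
    (reMat A)⁻¹ ≤ (1 + t ^ 2) • reMat A⁻¹ := by
  have hA := isUnit_of_posDef_reMat hH
  rw [inv_reMat_eq hA hH.isUnit, add_smul, one_smul,
    reMat_inv hA, ← Matrix.smul_mul, ← Matrix.mul_smul]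
  gcongr
  simpa only [star_eq_conjTranspose] using
    star_right_conjugate_le_conjugate ((imMat_isHermitian A).mul_inv_mul_le_sq_smul hH hK) A⁻¹

theorem InSector.posDef_reMat {α : ℝ} {A : Matrix n n ℂ} (hA : InSector α A) :
    (reMat A).PosDef :=
  (reMat_isHermitian A).posDef_of_re_pos fun x hx => by
    simpa [star_dotProduct_reMat_mulVec] using (hA x hx).1

theorem InSector.abs_re_imMat_le {α : ℝ} {A : Matrix n n ℂ} (hA : InSector α A) (x : n → ℂ) :
    |RCLike.re (star x ⬝ᵥ imMat A *ᵥ x)| ≤ Real.tan α * RCLike.re (star x ⬝ᵥ reMat A *ᵥ x) := by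
  rcases eq_or_ne x 0 with rfl | hx
  · simp
  · simpa [star_dotProduct_reMat_mulVec, star_dotProduct_imMat_mulVec] using (hA x hx).2

theorem InSector.inv {α : ℝ} {A : Matrix n n ℂ} (hA : InSector α A) : InSector α A⁻¹ := by
  intro x hx
  have hA' : IsUnit A.det := (isUnit_iff_isUnit_det A).mp (isUnit_of_posDef_reMat hA.posDef_reMat)
  set y := A⁻¹ *ᵥ x with hy
  have hAy : A *ᵥ y = x := by rw [hy, mulVec_mulVec, mul_nonsing_inv _ hA', one_mulVec]
  have hy0 : y ≠ 0 := by
    intro h0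
    rw [h0, mulVec_zero] at hAy
    exact hx hAy.symm
  rw [← hAy, star_dotProduct, Complex.star_def, Complex.conj_re, Complex.conj_im, abs_neg]
  exact hA y hy0

theorem InSector.sum_smul {α : ℝ} {ι : Type*} {s : Finset ι} {A : ι → Matrix n n ℂ} {w : ι → ℝ}
    (hA : ∀ i ∈ s, InSector α (A i)) (hw : ∀ i ∈ s, 0 ≤ w i) (hw_pos : 0 < ∑ i ∈ s, w i) :
    InSector α (∑ i ∈ s, w i • A i) := by
  intro x hx
  have hq : star x ⬝ᵥ (∑ i ∈ s, w i • A i) *ᵥ x = ∑ i ∈ s, w i • (star x ⬝ᵥ A i *ᵥ x) := by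
    simp only [sum_mulVec, dotProduct_sum, smul_mulVec, dotProduct_smul]
  rw [hq, Complex.re_sum, Complex.im_sum]
  simp only [Complex.smul_re, Complex.smul_im, smul_eq_mul]
  obtain ⟨j, hj, hwj⟩ :=
    Finset.exists_lt_of_sum_lt (s := s) (f := 0) (g := w) (by simpa using hw_pos)
  refine ⟨Finset.sum_pos' (fun i hi => mul_nonneg (hw i hi) (hA i hi x hx).1.le)
    ⟨j, hj, mul_pos hwj (hA j hj x hx).1⟩, ?_⟩
  calc |∑ i ∈ s, w i * (star x ⬝ᵥ A i *ᵥ x).im|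
      ≤ ∑ i ∈ s, w i * |(star x ⬝ᵥ A i *ᵥ x).im| := by
        refine (Finset.abs_sum_le_sum_abs _ _).trans_eq (Finset.sum_congr rfl fun i hi => ?_)
        rw [abs_mul, abs_of_nonneg (hw i hi)]
    _ ≤ ∑ i ∈ s, w i * (Real.tan α * (star x ⬝ᵥ A i *ᵥ x).re) :=
        Finset.sum_le_sum fun i hi => mul_le_mul_of_nonneg_left (hA i hi x hx).2 (hw i hi)
    _ = Real.tan α * ∑ i ∈ s, w i * (star x ⬝ᵥ A i *ᵥ x).re := by
        rw [Finset.mul_sum]; exact Finset.sum_congr rfl fun i _ => by ring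

end

/-- Sectorial comparison for the weighted harmonic mean:
`(∑ᵢ wᵢ (Re Aᵢ)⁻¹)⁻¹ ≤ sec²(α) · Re((∑ᵢ wᵢ Aᵢ⁻¹)⁻¹)` (Loewner order). -/
theorem harmonic_re_le_sec_sq_re_harmonic {n : Type*} [Fintype n] [DecidableEq n] {m : ℕ}
    (α : ℝ) (hα0 : 0 ≤ α) (hα : α < Real.pi / 2)
    (A : Fin m → Matrix n n ℂ) (hA : ∀ i, InSector α (A i))
    (w : Fin m → ℝ) (hw : ∀ i, 0 ≤ w i) (hw1 : ∑ i, w i = 1) :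
    ((((Real.cos α) ^ 2)⁻¹ : ℝ) • reMat (∑ i, w i • (A i)⁻¹)⁻¹
      - (∑ i, w i • (reMat (A i))⁻¹)⁻¹).PosSemidef := by
  have hcos : Real.cos α ≠ 0 := (Real.cos_pos_of_mem_Ioo ⟨by linarith [Real.pi_pos], hα⟩).ne'
  have hsec : (Real.cos α ^ 2)⁻¹ = 1 + Real.tan α ^ 2 := by
    rw [← Real.inv_one_add_tan_sq hcos, inv_inv]
  have hB : InSector α (∑ i, w i • (A i)⁻¹) :=
    InSector.sum_smul (fun i _ => (hA i).inv) (fun i _ => hw i) (by rw [hw1]; exact one_pos)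
  have hReB : reMat (∑ i, w i • (A i)⁻¹) ≤ ∑ i, w i • (reMat (A i))⁻¹ := by
    rw [reMat_sum]
    refine Finset.sum_le_sum fun i _ => ?_
    rw [reMat_smul]
    exact smul_le_smul_of_nonneg_left (reMat_inv_le_inv_reMat (hA i).posDef_reMat) (hw i)
  rw [← le_iff, hsec]
  exact (hB.posDef_reMat.inv_anti hReB).trans
    (inv_reMat_le_smul_reMat_inv hB.posDef_reMat hB.abs_re_imMat_le)
end

section
/- For sectorial matrices A₁,…,Aₘ with numerical ranges in S_α, weights λ summing to 1, and μ ≥ 0, letting γ = arctan(tan α/(1+μ)): R_μ(Re A, λ) + μI ≤ sec²(γ) (Re R_μ(A,λ) + μI), where R_μ(A,λ) = (∑ᵢ λᵢ(Aᵢ+μI)⁻¹)⁻¹ − μI and Re A = (Re A₁,…,Re Aₘ). -/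
open Matrix
open scoped ComplexOrder

/-!
Write `Bᵢ = Aᵢ + μI`, `C = ∑ wᵢ Bᵢ⁻¹` and `D = ∑ wᵢ (Re Bᵢ)⁻¹`, so that `R_μ(A, w) + μI = C⁻¹`
and `R_μ(Re A, w) + μI = D⁻¹`. For Hermitian `H > 0`, expanding `⟨u - Hv, H⁻¹(u - Hv)⟩ ≥ 0` gives
`2 Re⟨u, v⟩ ≤ ⟨u, H⁻¹u⟩ + ⟨v, Hv⟩`. Take `H = Re Bᵢ`, `u = D⁻¹x`, `vᵢ = Bᵢ⁻¹C⁻¹x`, weight by `wᵢ`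
and sum: as `∑ wᵢ vᵢ = x` and `⟨vᵢ, (Re Bᵢ) vᵢ⟩ = Re⟨vᵢ, Bᵢ vᵢ⟩ = Re⟨C⁻¹x, vᵢ⟩`, this yields
`⟨x, D⁻¹x⟩ ≤ Re⟨x, C⁻¹x⟩`, i.e. `D⁻¹ ≤ Re C⁻¹`. Since `Re C⁻¹ ≥ 0` and `sec² γ ≥ 1`, the bound
with the factor `sec² γ` follows.
-/

section

variable {n : Type*} [Fintype n]

noncomputable def reQuad (x : n → ℂ) : Matrix n n ℂ →ₗ[ℝ] ℝ where
  toFun M := (star x ⬝ᵥ M *ᵥ x).re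
  map_add' M N := by simp [add_mulVec, dotProduct_add]
  map_smul' c M := by simp [smul_mulVec, dotProduct_smul]

theorem reQuad_apply (x : n → ℂ) (M : Matrix n n ℂ) :
    reQuad x M = (star x ⬝ᵥ M *ᵥ x).re :=
  rfl

theorem re_star_dotProduct_comm (u v : n → ℂ) : (star u ⬝ᵥ v).re = (star v ⬝ᵥ u).re := by
  rw [star_dotProduct, Complex.star_def, Complex.conj_re]

theorem re_star_dotProduct_sum_smul {ι : Type*} [Fintype ι] (u : n → ℂ) (w : ι → ℝ)
    (v : ι → n → ℂ) : (star u ⬝ᵥ ∑ i, w i • v i).re = ∑ i, w i * (star u ⬝ᵥ v i).re := by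
  simp only [dotProduct_sum, dotProduct_smul, Complex.re_sum, Complex.smul_re, smul_eq_mul]

theorem reQuad_conjTranspose (x : n → ℂ) (M : Matrix n n ℂ) : reQuad x Mᴴ = reQuad x M := by
  rw [reQuad_apply, reQuad_apply, dotProduct_mulVec, ← star_mulVec, re_star_dotProduct_comm]

variable [DecidableEq n]

theorem mulVec_inv_mulVec {M : Matrix n n ℂ} (hM : IsUnit M.det) (x : n → ℂ) :
    M *ᵥ (M⁻¹ *ᵥ x) = x := by
  rw [mulVec_mulVec, mul_nonsing_inv _ hM, one_mulVec]

theorem inv_mulVec_mulVec {M : Matrix n n ℂ} (hM : IsUnit M.det) (x : n → ℂ) :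
    M⁻¹ *ᵥ (M *ᵥ x) = x := by
  rw [mulVec_mulVec, nonsing_inv_mul _ hM, one_mulVec]

theorem reQuad_inv {M : Matrix n n ℂ} (hM : IsUnit M.det) (x : n → ℂ) :
    reQuad x M⁻¹ = reQuad (M⁻¹ *ᵥ x) M := by
  calc reQuad x M⁻¹ = (star (M *ᵥ (M⁻¹ *ᵥ x)) ⬝ᵥ M⁻¹ *ᵥ x).re := by
        rw [mulVec_inv_mulVec hM, reQuad_apply]
    _ = reQuad (M⁻¹ *ᵥ x) M := re_star_dotProduct_comm _ _

theorem reMat_eq_real_smul (M : Matrix n n ℂ) : reMat M = (1 / 2 : ℝ) • (M + Mᴴ) := by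
  rw [reMat, ← Complex.coe_smul]
  norm_num

theorem reQuad_reMat (x : n → ℂ) (M : Matrix n n ℂ) : reQuad x (reMat M) = reQuad x M := by
  rw [reMat_eq_real_smul, map_smul, map_add, reQuad_conjTranspose, smul_eq_mul]
  ring

theorem isHermitian_reMat (M : Matrix n n ℂ) : (reMat M).IsHermitian := by
  rw [IsHermitian, reMat_eq_real_smul, conjTranspose_smul, conjTranspose_add,
    conjTranspose_conjTranspose, add_comm, star_trivial]

theorem Matrix.IsHermitian.reMat_eq {M : Matrix n n ℂ} (hM : M.IsHermitian) : reMat M = M := by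
  rw [reMat_eq_real_smul, hM.eq, ← two_smul ℝ M, smul_smul]
  norm_num

theorem reMat_add (M N : Matrix n n ℂ) : reMat (M + N) = reMat M + reMat N := by
  simp only [reMat, conjTranspose_add, ← smul_add]
  abel_nf

theorem reMat_sub (M N : Matrix n n ℂ) : reMat (M - N) = reMat M - reMat N := by
  simp only [reMat, conjTranspose_sub, ← smul_sub]
  abel_nf

theorem reMat_smul_one (μ : ℝ) : reMat (μ • (1 : Matrix n n ℂ)) = μ • (1 : Matrix n n ℂ) :=
  (isHermitian_one.smul (.all μ)).reMat_eq

theorem reMat_add_smul_one (M : Matrix n n ℂ) (μ : ℝ) :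
    reMat (M + μ • (1 : Matrix n n ℂ)) = reMat M + μ • (1 : Matrix n n ℂ) := by
  rw [reMat_add, reMat_smul_one]

theorem posSemidef_reMat_iff {M : Matrix n n ℂ} :
    (reMat M).PosSemidef ↔ ∀ x, 0 ≤ reQuad x M := by
  simp only [posSemidef_iff_dotProduct_mulVec, isHermitian_reMat, true_and, ← reQuad_reMat _ M,
    reQuad_apply, Complex.nonneg_iff]
  have := (isHermitian_reMat M).im_star_dotProduct_mulVec_self
  simp_all

theorem posDef_reMat_iff {M : Matrix n n ℂ} :
    (reMat M).PosDef ↔ ∀ x, x ≠ 0 → 0 < reQuad x M := by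
  simp only [posDef_iff_dotProduct_mulVec, isHermitian_reMat, true_and, ← reQuad_reMat _ M,
    reQuad_apply, Complex.pos_iff]
  have := (isHermitian_reMat M).im_star_dotProduct_mulVec_self
  simp_all

theorem isUnit_det_of_posDef_reMat {M : Matrix n n ℂ} (hM : (reMat M).PosDef) :
    IsUnit M.det := by
  rw [isUnit_iff_ne_zero]
  intro h
  obtain ⟨v, hv, hMv⟩ := exists_mulVec_eq_zero_iff.2 h
  simpa [reQuad_apply, hMv] using posDef_reMat_iff.1 hM v hv

theorem posDef_reMat_inv {M : Matrix n n ℂ} (hM : (reMat M).PosDef) : (reMat M⁻¹).PosDef := by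
  have hdet := isUnit_det_of_posDef_reMat hM
  rw [posDef_reMat_iff] at hM ⊢
  intro x hx
  rw [reQuad_inv hdet]
  refine hM _ fun h => hx ?_
  rw [← mulVec_inv_mulVec hdet x, h, mulVec_zero]

theorem posSemidef_reMat_inv {M : Matrix n n ℂ} (hM : (reMat M).PosSemidef) :
    (reMat M⁻¹).PosSemidef := by
  rw [posSemidef_reMat_iff] at hM ⊢
  intro x
  by_cases hdet : IsUnit M.det
  · rw [reQuad_inv hdet]
    exact hM _
  · simp [nonsing_inv_apply_not_isUnit _ hdet]

theorem posDef_reMat_add_smul_one {M : Matrix n n ℂ} (hM : (reMat M).PosDef) {μ : ℝ}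
    (hμ : 0 ≤ μ) : (reMat (M + μ • (1 : Matrix n n ℂ))).PosDef := by
  rw [reMat_add_smul_one]
  exact hM.add_posSemidef (PosSemidef.one.smul hμ)

theorem two_re_star_dotProduct_le {H : Matrix n n ℂ} (hH : H.PosDef) (u v : n → ℂ) :
    2 * (star u ⬝ᵥ v).re ≤ reQuad u H⁻¹ + reQuad v H := by
  have hdet : IsUnit H.det := (isUnit_iff_isUnit_det H).1 hH.isUnit
  have hsq : reQuad (u - H *ᵥ v) H⁻¹ = reQuad u H⁻¹ - 2 * (star u ⬝ᵥ v).re + reQuad v H := by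
    have hcross : star (H *ᵥ v) ⬝ᵥ H⁻¹ *ᵥ u = star v ⬝ᵥ u := by
      rw [star_mulVec, hH.isHermitian.eq, ← dotProduct_mulVec, mulVec_inv_mulVec hdet]
    have hdiag : (star (H *ᵥ v) ⬝ᵥ v).re = reQuad v H := re_star_dotProduct_comm _ _
    simp only [reQuad_apply, mulVec_sub, inv_mulVec_mulVec hdet, star_sub, sub_dotProduct,
      dotProduct_sub, Complex.sub_re, hcross, re_star_dotProduct_comm v u] at hdiag ⊢
    rw [← hdiag]
    ring
  have hnonneg : 0 ≤ reQuad (u - H *ᵥ v) H⁻¹ :=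
    (Complex.nonneg_iff.1 (hH.inv.posSemidef.dotProduct_mulVec_nonneg _)).1
  rw [hsq] at hnonneg
  linarith

section WeightedSum

variable {ι : Type*} [Fintype ι] {B : ι → Matrix n n ℂ} {w : ι → ℝ}

theorem posSemidef_reMat_sum_smul (hB : ∀ i, (reMat (B i)).PosSemidef) (hw : ∀ i, 0 ≤ w i) :
    (reMat (∑ i, w i • B i)).PosSemidef := by
  refine posSemidef_reMat_iff.2 fun x => ?_
  simp only [map_sum, map_smul, smul_eq_mul]
  exact Finset.sum_nonneg fun i _ => mul_nonneg (hw i) (posSemidef_reMat_iff.1 (hB i) x)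

theorem posDef_reMat_sum_smul (hB : ∀ i, (reMat (B i)).PosDef) (hw : ∀ i, 0 ≤ w i)
    (hpos : ∃ i, 0 < w i) : (reMat (∑ i, w i • B i)).PosDef := by
  refine posDef_reMat_iff.2 fun x hx => ?_
  simp only [map_sum, map_smul, smul_eq_mul]
  obtain ⟨j, hj⟩ := hpos
  refine Finset.sum_pos' (fun i _ => mul_nonneg (hw i) ?_) ⟨j, Finset.mem_univ j, ?_⟩
  · exact (posDef_reMat_iff.1 (hB i) x hx).le
  · exact mul_pos hj (posDef_reMat_iff.1 (hB j) x hx)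

theorem reQuad_inv_sum_smul_inv_reMat_le (hB : ∀ i, (reMat (B i)).PosDef) (hw : ∀ i, 0 ≤ w i)
    (hC : IsUnit (∑ i, w i • (B i)⁻¹).det) (hD : IsUnit (∑ i, w i • (reMat (B i))⁻¹).det)
    (x : n → ℂ) :
    reQuad x (∑ i, w i • (reMat (B i))⁻¹)⁻¹ ≤ reQuad x (∑ i, w i • (B i)⁻¹)⁻¹ := by
  set C := ∑ i, w i • (B i)⁻¹
  set D := ∑ i, w i • (reMat (B i))⁻¹
  set y := C⁻¹ *ᵥ x
  set u := D⁻¹ *ᵥ x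
  set v := fun i => (B i)⁻¹ *ᵥ y
  have hv : ∑ i, w i • v i = x := by
    rw [← mulVec_inv_mulVec hC x]
    simp only [C, v, sum_mulVec, smul_mulVec]
    rfl
  have hHv : ∀ i, reQuad (v i) (reMat (B i)) = (star y ⬝ᵥ v i).re := fun i => by
    rw [reQuad_reMat, reQuad_apply, mulVec_inv_mulVec (isUnit_det_of_posDef_reMat (hB i)),
      re_star_dotProduct_comm]
  have hDu : reQuad u D = (star u ⬝ᵥ x).re := by
    rw [reQuad_apply, mulVec_inv_mulVec hD]
  have hsum : ∑ i, w i * (2 * (star u ⬝ᵥ v i).re)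
      ≤ ∑ i, w i * (reQuad u (reMat (B i))⁻¹ + reQuad (v i) (reMat (B i))) :=
    Finset.sum_le_sum fun i _ =>
      mul_le_mul_of_nonneg_left (two_re_star_dotProduct_le (hB i) u (v i)) (hw i)
  simp only [mul_add, Finset.sum_add_distrib, hHv, mul_left_comm _ (2 : ℝ), ← Finset.mul_sum,
    ← re_star_dotProduct_sum_smul, hv] at hsum
  have hDsum : ∑ i, w i * reQuad u (reMat (B i))⁻¹ = reQuad u D := by
    simp only [D, map_sum, map_smul, smul_eq_mul]
  rw [hDsum, hDu] at hsum
  change (star x ⬝ᵥ u).re ≤ (star x ⬝ᵥ y).re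
  rw [re_star_dotProduct_comm x, re_star_dotProduct_comm x]
  linarith

theorem posSemidef_reMat_inv_sum_smul_inv (hB : ∀ i, (reMat (B i)).PosDef) (hw : ∀ i, 0 ≤ w i) :
    (reMat (∑ i, w i • (B i)⁻¹)⁻¹).PosSemidef :=
  posSemidef_reMat_inv <|
    posSemidef_reMat_sum_smul (fun i => (posDef_reMat_inv (hB i)).posSemidef) hw

theorem posSemidef_reMat_inv_sum_smul_inv_sub (hB : ∀ i, (reMat (B i)).PosDef)
    (hw : ∀ i, 0 ≤ w i) :
    (reMat (∑ i, w i • (B i)⁻¹)⁻¹ - (∑ i, w i • (reMat (B i))⁻¹)⁻¹).PosSemidef := by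
  by_cases hpos : ∃ i, 0 < w i
  swap
  -- all weights vanish, so both sums are `0` and their inverses are the junk value `0`
  · have hzero : w = 0 := funext fun i => le_antisymm (not_lt.1 (not_exists.1 hpos i)) (hw i)
    simpa [hzero, reMat] using PosSemidef.zero
  have hH : ∀ i, (reMat (reMat (B i))).PosDef := fun i => by
    rw [(isHermitian_reMat (B i)).reMat_eq]
    exact hB i
  have hC := isUnit_det_of_posDef_reMat
    (posDef_reMat_sum_smul (fun i => posDef_reMat_inv (hB i)) hw hpos)
  have hD := isUnit_det_of_posDef_reMat
    (posDef_reMat_sum_smul (fun i => posDef_reMat_inv (hH i)) hw hpos)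
  have hDherm : (∑ i, w i • (reMat (B i))⁻¹)⁻¹.IsHermitian :=
    IsHermitian.inv (isSelfAdjoint_sum _ fun i _ => ((isHermitian_reMat (B i)).inv).smul (.all _))
  rw [← hDherm.reMat_eq, ← reMat_sub, posSemidef_reMat_iff]
  intro x
  rw [map_sub, sub_nonneg]
  exact reQuad_inv_sum_smul_inv_reMat_le hB hw hC hD x

end WeightedSum

end

theorem resAvg_re_le_sec_sq_re_resAvg_general {n : Type*} [Fintype n] [DecidableEq n] {m : ℕ}
    (α : ℝ)
    (A : Fin m → Matrix n n ℂ) (hA : ∀ i, InSector α (A i))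
    (w : Fin m → ℝ) (hw : ∀ i, 0 ≤ w i) (μ : ℝ) (hμ : 0 ≤ μ) :
    ((((Real.cos (Real.arctan (Real.tan α / (1 + μ)))) ^ 2)⁻¹ : ℝ) •
        (reMat (resAvg μ A w) + μ • (1 : Matrix n n ℂ))
      - (resAvg μ (fun i => reMat (A i)) w + μ • (1 : Matrix n n ℂ))).PosSemidef := by
  have hs : 1 ≤ (Real.cos (Real.arctan (Real.tan α / (1 + μ))) ^ 2)⁻¹ := by
    rw [Real.cos_sq_arctan, one_div, inv_inv]
    exact le_add_of_nonneg_right (sq_nonneg _)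
  set B := fun i => A i + μ • (1 : Matrix n n ℂ)
  have hB : ∀ i, (reMat (B i)).PosDef := fun i =>
    posDef_reMat_add_smul_one (posDef_reMat_iff.2 fun x hx => (hA i x hx).1) hμ
  have hRe : reMat (resAvg μ A w) + μ • (1 : Matrix n n ℂ) = reMat (∑ i, w i • (B i)⁻¹)⁻¹ := by
    rw [resAvg, reMat_sub, reMat_smul_one, sub_add_cancel]
  have hReA : resAvg μ (fun i => reMat (A i)) w + μ • (1 : Matrix n n ℂ)
      = (∑ i, w i • (reMat (B i))⁻¹)⁻¹ := by
    simp only [resAvg, B, reMat_add_smul_one, sub_add_cancel]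
  rw [hRe, hReA]
  convert ((posSemidef_reMat_inv_sum_smul_inv hB hw).smul (sub_nonneg.2 hs)).add
    (posSemidef_reMat_inv_sum_smul_inv_sub hB hw) using 1
  module

/-- For sectorial matrices, with `γ = arctan(tan α/(1+μ))`:
`R_μ(Re A, w) + μI ≤ sec²(γ) (Re R_μ(A,w) + μI)` (Loewner order). -/
theorem resAvg_re_le_sec_sq_re_resAvg {n : Type*} [Fintype n] [DecidableEq n] {m : ℕ}
    (α : ℝ) (hα0 : 0 ≤ α) (hα : α < Real.pi / 2)
    (A : Fin m → Matrix n n ℂ) (hA : ∀ i, InSector α (A i))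
    (w : Fin m → ℝ) (hw : ∀ i, 0 ≤ w i) (hw1 : ∑ i, w i = 1) (μ : ℝ) (hμ : 0 ≤ μ) :
    ((((Real.cos (Real.arctan (Real.tan α / (1 + μ)))) ^ 2)⁻¹ : ℝ) •
        (reMat (resAvg μ A w) + μ • (1 : Matrix n n ℂ))
      - (resAvg μ (fun i => reMat (A i)) w + μ • (1 : Matrix n n ℂ))).PosSemidef :=
  resAvg_re_le_sec_sq_re_resAvg_general α A hA w hw μ hμ
end
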